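/- arXiv:1706.09757 — 4 statements merged into one kernel-verified Lean document; each statement's English description precedes it below -/
import Mathlib

section
/- For every odd natural number k, the distance of the k-bit majority function MAJ_k to the closest affine Boolean function equals 2^{k−1} − C(k−1, (k−1)/2); that is, the minimum, over all affine functions L(x1,…,xk) = c0 ⊕ c1·x1 ⊕ … ⊕ ck·xk with coefficients in {0,1}, of the number of inputs x ∈ {0,1}^k on which L differs from MAJ_k, equals 2^{k−1} − C(k−1, (k−1)/2). -/
/-- The majority function on `k` bits: outputs `true` iff more than half the
inputs are `true` (the most common value, for odd `k`). -/
def MAJ (k : ℕ) (x : Fin k → Bool) : Bool :=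
  decide (k < 2 * (Finset.univ.filter (fun i => x i = true)).card)

/-- The affine Boolean function `L(x) = c0 ⊕ c1·x1 ⊕ … ⊕ ck·xk` with
coefficients `c0` and `c : Fin k → Bool`. -/
def affineFn (k : ℕ) (c0 : Bool) (c : Fin k → Bool) (x : Fin k → Bool) : Bool :=
  xor c0 (decide ((Finset.univ.filter (fun i => c i && x i)).card % 2 = 1))

/-- The number of `k`-bit inputs on which the affine function with
coefficients `(c0, c)` differs from the `k`-bit majority function. -/
def majAffineDist (k : ℕ) (c0 : Bool) (c : Fin k → Bool) : ℕ :=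
  (Finset.univ.filter (fun x : Fin k → Bool => affineFn k c0 c x ≠ MAJ k x)).card

namespace MajDist

open Finset

variable {k : ℕ}

/-- Number of `true` coordinates away from position `i`. -/
def cnt (i : Fin k) (x : Fin k → Bool) : ℕ :=
  ((Finset.univ.erase i).filter (fun j => x j = true)).card

lemma tot_eq (i : Fin k) (x : Fin k → Bool) :
    (Finset.univ.filter (fun j => x j = true)).card
      = cnt i x + (if x i = true then 1 else 0) := by
  have h : (Finset.univ : Finset (Fin k)) = insert i (Finset.univ.erase i) :=
    (Finset.insert_erase (Finset.mem_univ i)).symm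
  rw [h, Finset.filter_insert]
  by_cases hx : x i = true
  · rw [if_pos hx, Finset.card_insert_of_notMem (by simp), if_pos hx]
    rfl
  · rw [if_neg hx, if_neg hx]
    rfl

lemma maj_eq (i : Fin k) (x : Fin k → Bool) :
    MAJ k x = decide (k < 2 * (cnt i x + if x i = true then 1 else 0)) := by
  unfold MAJ; rw [tot_eq i x]

lemma cnt_update (i : Fin k) (x : Fin k → Bool) (b : Bool) :
    cnt i (Function.update x i b) = cnt i x := by
  unfold cnt
  congr 1
  apply Finset.filter_congr
  intro j hj
  rw [Function.update_of_ne (Finset.mem_erase.mp hj).1]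

lemma choose_le_two_pow (n m : ℕ) : Nat.choose n m ≤ 2 ^ n := by
  by_cases hm : m ≤ n
  · calc Nat.choose n m ≤ ∑ i ∈ Finset.range (n + 1), Nat.choose n i :=
      Finset.single_le_sum (fun i _ => Nat.zero_le _) (Finset.mem_range.mpr (by omega))
    _ = 2 ^ n := Nat.sum_range_choose n
  · rw [Nat.choose_eq_zero_of_lt (by omega)]
    exact Nat.zero_le _

lemma card_base (i : Fin k) :
    (Finset.univ.filter (fun x : Fin k → Bool => x i = false)).card = 2 ^ (k - 1) := by
  have h : (Finset.univ.filter (fun x : Fin k → Bool => x i = false)).card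
      = ((Finset.univ.erase i).powerset).card := by
    apply Finset.card_nbij' (fun x => (Finset.univ.erase i).filter (fun j => x j = true))
      (fun s => fun j => decide (j ∈ s))
    · intro x _
      simp only [Finset.mem_coe, Finset.mem_powerset]
      exact Finset.filter_subset _ _
    · intro s hs
      simp only [Finset.mem_coe, Finset.mem_powerset] at hs
      simp only [Finset.mem_coe, Finset.mem_filter, Finset.mem_univ, true_and]
      simp only [decide_eq_false_iff_not]
      intro hi
      exact (Finset.notMem_erase i _) (hs hi)
    · intro x hx
      simp only [Finset.mem_coe, Finset.mem_filter, Finset.mem_univ, true_and] at hx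
      funext j
      by_cases hj : j = i
      · subst hj
        simp [hx]
      · simp [Finset.mem_erase, hj]
    · intro s hs
      simp only [Finset.mem_coe, Finset.mem_powerset] at hs
      ext j
      simp only [Finset.mem_filter, Finset.mem_erase, Finset.mem_univ, decide_eq_true_eq,
        true_and, and_true]
      constructor
      · rintro ⟨-, h2⟩; exact h2
      · intro hjs
        exact ⟨(Finset.mem_erase.mp (hs hjs)).1, hjs⟩
  rw [h, Finset.card_powerset, Finset.card_erase_of_mem (Finset.mem_univ i),
    Finset.card_univ, Fintype.card_fin]

lemma card_piv (i : Fin k) (m : ℕ) :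
    ((Finset.univ.filter (fun x : Fin k → Bool => x i = false)).filter
      (fun x => cnt i x = m)).card = Nat.choose (k - 1) m := by
  have h : ((Finset.univ.filter (fun x : Fin k → Bool => x i = false)).filter
      (fun x => cnt i x = m)).card
      = (Finset.powersetCard m (Finset.univ.erase i)).card := by
    apply Finset.card_nbij' (fun x => (Finset.univ.erase i).filter (fun j => x j = true))
      (fun s => fun j => decide (j ∈ s))
    · intro x hx
      simp only [Finset.mem_coe, Finset.mem_filter] at hx
      simp only [Finset.mem_coe, Finset.mem_powersetCard]
      exact ⟨Finset.filter_subset _ _, hx.2⟩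
    · intro s hs
      simp only [Finset.mem_coe, Finset.mem_powersetCard] at hs
      simp only [Finset.mem_coe, Finset.mem_filter, Finset.mem_univ, true_and]
      constructor
      · simp only [decide_eq_false_iff_not]
        intro hi
        exact (Finset.notMem_erase i _) (hs.1 hi)
      · unfold cnt
        have : (Finset.univ.erase i).filter (fun j => decide (j ∈ s) = true) = s := by
          ext j
          simp only [Finset.mem_filter, decide_eq_true_eq]
          constructor
          · rintro ⟨-, h2⟩; exact h2
          · intro h; exact ⟨hs.1 h, h⟩
        rw [this, hs.2]
    · intro x hx
      simp only [Finset.mem_coe, Finset.mem_filter, Finset.mem_univ, true_and] at hx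
      funext j
      by_cases hj : j = i
      · subst hj
        simp [hx.1]
      · simp [Finset.mem_erase, hj]
    · intro s hs
      simp only [Finset.mem_coe, Finset.mem_powersetCard] at hs
      ext j
      simp only [Finset.mem_filter, Finset.mem_erase, Finset.mem_univ, decide_eq_true_eq,
        true_and, and_true]
      constructor
      · rintro ⟨-, h2⟩; exact h2
      · intro hjs
        exact ⟨(Finset.mem_erase.mp (hs.1 hjs)).1, hjs⟩
  rw [h, Finset.card_powersetCard, Finset.card_erase_of_mem (Finset.mem_univ i),
    Finset.card_univ, Fintype.card_fin]

/-- The set of non-pivotal base points has cardinality `2^(k-1) - C(k-1, m)`. -/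
lemma card_nonpiv (i : Fin k) (m : ℕ) :
    ((Finset.univ.filter (fun x : Fin k → Bool => x i = false)).filter
      (fun x => ¬ (cnt i x = m))).card = 2 ^ (k - 1) - Nat.choose (k - 1) m := by
  rw [Finset.filter_not, Finset.card_sdiff_of_subset (Finset.filter_subset _ _), card_base i,
    card_piv i m]

lemma affine_flip {c0 : Bool} {c : Fin k → Bool} {i : Fin k} (hc : c i = true)
    (x : Fin k → Bool) :
    affineFn k c0 c (Function.update x i (!(x i))) = !(affineFn k c0 c x) := by
  have key : ((Finset.univ.filter
        (fun j => (c j && Function.update x i (!(x i)) j) = true)).card) % 2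
      ≠ ((Finset.univ.filter (fun j => (c j && x j) = true)).card) % 2 := by
    by_cases hxi : x i = true
    · have hmem : i ∈ Finset.univ.filter (fun j => (c j && x j) = true) := by
        simp [hc, hxi]
      have hS : Finset.univ.filter (fun j => (c j && Function.update x i (!(x i)) j) = true)
          = (Finset.univ.filter (fun j => (c j && x j) = true)).erase i := by
        ext j
        simp only [Finset.mem_filter, Finset.mem_erase, Finset.mem_univ, true_and]
        by_cases hj : j = i
        · subst hj; simp [hxi]
        · rw [Function.update_of_ne hj]
          simp [hj]
      have hpos : 0 < (Finset.univ.filter (fun j => (c j && x j) = true)).card :=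
        Finset.card_pos.mpr ⟨i, hmem⟩
      rw [hS, Finset.card_erase_of_mem hmem]
      omega
    · have hxf : x i = false := by
        cases hb : x i
        · rfl
        · exact absurd hb hxi
      have hmem : i ∉ Finset.univ.filter (fun j => (c j && x j) = true) := by
        simp [hxf]
      have hS : Finset.univ.filter (fun j => (c j && Function.update x i (!(x i)) j) = true)
          = insert i (Finset.univ.filter (fun j => (c j && x j) = true)) := by
        ext j
        simp only [Finset.mem_filter, Finset.mem_insert, Finset.mem_univ, true_and]
        by_cases hj : j = i
        · subst hj
          simp [Function.update_self, hc, hxf]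
        · rw [Function.update_of_ne hj]
          simp [hj]
      rw [hS, Finset.card_insert_of_notMem hmem]
      omega
  unfold affineFn
  have h1 : (((Finset.univ.filter
        (fun j => (c j && Function.update x i (!(x i)) j) = true)).card) % 2 = 1)
      ↔ ¬ (((Finset.univ.filter (fun j => (c j && x j) = true)).card) % 2 = 1) := by
    omega
  rw [decide_eq_decide.mpr h1, decide_not]
  cases c0 <;> cases hb : decide
      (((Finset.univ.filter (fun j => (c j && x j) = true)).card) % 2 = 1) <;> rfl

/-- If `cnt i x ≠ h` (non-pivotal) and `x i = false`, then flipping bit `i`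
does not change the majority. -/
lemma maj_nonpiv {h : ℕ} (hkodd : k = 2 * h + 1) {i : Fin k} {x : Fin k → Bool}
    (hx : x i = false) (hcnt : cnt i x ≠ h) :
    MAJ k (Function.update x i true) = MAJ k x := by
  subst hkodd
  rw [maj_eq i, maj_eq i, Function.update_self, cnt_update, hx]
  exact decide_eq_decide.mpr
    (by rw [if_pos rfl, if_neg (by simp : ¬((false : Bool) = true))]; omega)

lemma update_base {i : Fin k} {x : Fin k → Bool} (hx : x i = false) :
    Function.update x i false = x := by
  rw [← hx, Function.update_eq_self]

/-- Lower bound: every affine function is at distance at least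
`2^(k-1) - C(k-1,h)` from majority. -/
lemma lower_bound {h : ℕ} (hkodd : k = 2 * h + 1) (c0 : Bool) (c : Fin k → Bool) :
    2 ^ (k - 1) - Nat.choose (k - 1) h ≤ majAffineDist k c0 c := by
  by_cases hc : ∃ i, c i = true
  · obtain ⟨i, hci⟩ := hc
    rw [← card_nonpiv i h]
    unfold majAffineDist
    apply Finset.card_le_card_of_injOn
      (fun x => if affineFn k c0 c x ≠ MAJ k x then x else Function.update x i true)
    · intro x hx
      simp only [Finset.mem_coe, Finset.mem_filter, Finset.mem_univ, true_and] at hx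
      obtain ⟨hx0, hcnt⟩ := hx
      by_cases hd : affineFn k c0 c x ≠ MAJ k x
      · simp only [if_pos hd, Finset.mem_coe, Finset.mem_filter, Finset.mem_univ, true_and]
        exact hd
      · simp only [if_neg hd, Finset.mem_coe, Finset.mem_filter, Finset.mem_univ, true_and]
        push_neg at hd
        have hflip := affine_flip (c0 := c0) hci x
        rw [hx0] at hflip
        simp only [Bool.not_false] at hflip
        rw [hflip, hd, maj_nonpiv hkodd hx0 hcnt]
        simp
    · intro x hx y hy hxy
      simp only [Finset.coe_filter, Set.mem_setOf_eq, Finset.mem_filter, Finset.mem_univ,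
        true_and] at hx hy
      dsimp only at hxy
      have key : ∀ z : Fin k → Bool, z i = false →
          Function.update (if affineFn k c0 c z ≠ MAJ k z then z
            else Function.update z i true) i false = z := by
        intro z hz
        by_cases hd : affineFn k c0 c z ≠ MAJ k z
        · rw [if_pos hd, update_base hz]
        · rw [if_neg hd, Function.update_idem, update_base hz]
      rw [← key x hx.1, ← key y hy.1, hxy]
  · push_neg at hc
    have hcf : ∀ i, c i = false := by
      intro i
      cases hci : c i
      · rfl
      · exact absurd hci (hc i)
    have haff : ∀ x : Fin k → Bool, affineFn k c0 c x = c0 := by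
      intro x
      unfold affineFn
      have hemp : Finset.univ.filter (fun j => (c j && x j) = true) = ∅ := by
        ext j
        simp [hcf j]
      rw [hemp]
      simp
    unfold majAffineDist
    have hD : Finset.univ.filter (fun x : Fin k → Bool => affineFn k c0 c x ≠ MAJ k x)
        = Finset.univ.filter (fun x : Fin k → Bool => MAJ k x = !c0) := by
      apply Finset.filter_congr
      intro x _
      rw [haff x]
      cases c0 <;> cases hM : MAJ k x <;> simp
    rw [hD]
    -- majority is balanced: each value is attained 2^(k-1) times
    have hneg : ∀ x : Fin k → Bool, MAJ k (fun j => !(x j)) = !(MAJ k x) := by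
      intro x
      unfold MAJ
      set t := (Finset.univ.filter (fun j => x j = true)).card with ht
      have hcompl : (Finset.univ.filter (fun j => (!(x j)) = true)).card = k - t := by
        have heq : Finset.univ.filter (fun j : Fin k => (!(x j)) = true)
            = Finset.univ.filter (fun j : Fin k => ¬ (x j = true)) := by
          apply Finset.filter_congr
          intro j _
          simp
        have hsplit := Finset.card_filter_add_card_filter_not
          (s := (Finset.univ : Finset (Fin k))) (p := fun j => x j = true)
        rw [Finset.card_univ, Fintype.card_fin] at hsplit
        rw [heq]
        omega
      rw [hcompl]
      have htle : t ≤ k := by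
        rw [ht]
        calc (Finset.univ.filter (fun j => x j = true)).card
            ≤ (Finset.univ : Finset (Fin k)).card := Finset.card_filter_le _ _
        _ = k := by rw [Finset.card_univ, Fintype.card_fin]
      have hiff : (k < 2 * (k - t)) ↔ ¬ (k < 2 * t) := by omega
      rw [decide_eq_decide.mpr hiff, decide_not]
    have hbal : (Finset.univ.filter (fun x : Fin k → Bool => MAJ k x = true)).card
        = (Finset.univ.filter (fun x : Fin k → Bool => MAJ k x = false)).card := by
      apply Finset.card_nbij' (fun x => fun j => !(x j)) (fun x => fun j => !(x j))
      · intro x hx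
        simp only [Finset.mem_coe, Finset.mem_filter, Finset.mem_univ, true_and] at hx ⊢
        rw [hneg x, hx]
        rfl
      · intro x hx
        simp only [Finset.mem_coe, Finset.mem_filter, Finset.mem_univ, true_and] at hx ⊢
        rw [hneg x, hx]
        rfl
      · intro x _
        funext j
        simp
      · intro x _
        funext j
        simp
    have hsum := Finset.card_filter_add_card_filter_not
      (s := (Finset.univ : Finset (Fin k → Bool)))
      (p := fun x => MAJ k x = true)
    have hcards : (Finset.univ : Finset (Fin k → Bool)).card = 2 ^ k := by
      rw [Finset.card_univ, Fintype.card_fun, Fintype.card_bool, Fintype.card_fin]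
    have hnottrue : Finset.univ.filter (fun x : Fin k → Bool => ¬ (MAJ k x = true))
        = Finset.univ.filter (fun x : Fin k → Bool => MAJ k x = false) := by
      apply Finset.filter_congr
      intro x _
      simp
    rw [hcards, hnottrue, hbal] at hsum
    have hk1 : k - 1 + 1 = k := by omega
    have hpow : 2 ^ k = 2 * 2 ^ (k - 1) := by
      calc 2 ^ k = 2 ^ (k - 1 + 1) := by rw [hk1]
      _ = 2 * 2 ^ (k - 1) := by rw [pow_succ]; ring
    cases c0
    · simp only [Bool.not_false]
      omega
    · simp only [Bool.not_true]
      omega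

/-- The dictator function achieves the bound exactly. -/
lemma dict_dist {h : ℕ} (hkodd : k = 2 * h + 1) (i : Fin k) :
    majAffineDist k false (fun j => decide (j = i)) = 2 ^ (k - 1) - Nat.choose (k - 1) h := by
  have haff : ∀ x : Fin k → Bool, affineFn k false (fun j => decide (j = i)) x = x i := by
    intro x
    unfold affineFn
    have hfil : Finset.univ.filter (fun j => (decide (j = i) && x j) = true)
        = if x i = true then {i} else ∅ := by
      ext j
      by_cases hxi : x i = true
      · rw [if_pos hxi]
        simp only [Finset.mem_filter, Finset.mem_univ, true_and, Finset.mem_singleton,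
          Bool.and_eq_true, decide_eq_true_eq]
        constructor
        · rintro ⟨hj, -⟩; exact hj
        · rintro rfl; exact ⟨rfl, hxi⟩
      · rw [if_neg hxi]
        simp only [Finset.mem_filter, Finset.mem_univ, true_and, Finset.notMem_empty,
          iff_false, Bool.and_eq_true, decide_eq_true_eq, not_and]
        rintro rfl
        exact fun hh => hxi hh
    rw [hfil]
    by_cases hxi : x i = true
    · rw [if_pos hxi, hxi]
      simp
    · rw [if_neg hxi]
      simp only [Finset.card_empty]
      rw [Bool.not_eq_true] at hxi
      rw [hxi]
      simp
  unfold majAffineDist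
  have hD : Finset.univ.filter
      (fun x : Fin k → Bool => affineFn k false (fun j => decide (j = i)) x ≠ MAJ k x)
      = Finset.univ.filter (fun x : Fin k → Bool => x i ≠ MAJ k x) := by
    apply Finset.filter_congr
    intro x _
    rw [haff x]
  rw [hD, ← card_nonpiv i h]
  apply Finset.card_nbij' (fun x => Function.update x i false)
    (fun y => if MAJ k y = true then y else Function.update y i true)
  · -- ψ maps disagreement points to non-pivotal base points
    intro x hx
    simp only [Finset.mem_coe, Finset.mem_filter, Finset.mem_univ, true_and] at hx
    simp only [Finset.mem_coe, Finset.mem_filter, Finset.mem_univ, true_and]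
    refine ⟨Function.update_self i false x, ?_⟩
    rw [cnt_update]
    intro hcnt
    rw [maj_eq i x] at hx
    by_cases hxi : x i = true
    · rw [hxi, if_pos rfl] at hx
      apply hx
      rw [hcnt]
      symm
      apply decide_eq_true
      omega
    · rw [Bool.not_eq_true] at hxi
      rw [hxi, if_neg (by simp : ¬ ((false : Bool) = true))] at hx
      apply hx
      rw [hcnt]
      symm
      apply decide_eq_false
      omega
  · -- φ maps non-pivotal base points to disagreement points
    intro y hy
    simp only [Finset.mem_coe, Finset.mem_filter, Finset.mem_univ, true_and] at hy
    obtain ⟨hy0, hcnt⟩ := hy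
    simp only [Finset.mem_coe, Finset.mem_filter, Finset.mem_univ, true_and]
    by_cases hM : MAJ k y = true
    · rw [if_pos hM, hy0, hM]
      simp
    · rw [if_neg hM, Function.update_self, maj_nonpiv hkodd hy0 hcnt]
      rw [Bool.not_eq_true] at hM
      rw [hM]
      simp
  · -- left inverse : φ (ψ x) = x on disagreement points
    intro x hx
    simp only [Finset.mem_coe, Finset.mem_filter, Finset.mem_univ, true_and] at hx
    dsimp only
    by_cases hxi : x i = true
    · -- x i = true, MAJ x = false, base point agrees → take the update branch
      have hMx : MAJ k x = false := by
        cases hM : MAJ k x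
        · rfl
        · exact absurd (hxi.trans hM.symm) hx
      have hMb : MAJ k (Function.update x i false) = false := by
        rw [maj_eq i, Function.update_self, cnt_update]
        rw [maj_eq i x, hxi] at hMx
        simp only [if_pos rfl] at hMx
        have := of_decide_eq_false hMx
        apply decide_eq_false
        simp only [if_neg (by simp : ¬ (false = true))]
        omega
      rw [if_neg (by rw [hMb]; simp), Function.update_idem, ← hxi, Function.update_eq_self]
    · -- x i = false : base point is x itself and it disagrees, MAJ x = true
      rw [Bool.not_eq_true] at hxi
      rw [update_base hxi]
      have hMx : MAJ k x = true := by
        cases hM : MAJ k x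
        · rw [hxi, hM] at hx
          exact absurd rfl hx
        · rfl
      rw [if_pos hMx]
  · -- right inverse : ψ (φ y) = y on non-pivotal base points
    intro y hy
    simp only [Finset.mem_coe, Finset.mem_filter, Finset.mem_univ, true_and] at hy
    dsimp only
    by_cases hM : MAJ k y = true
    · rw [if_pos hM, update_base hy.1]
    · rw [if_neg hM, Function.update_idem, update_base hy.1]

end MajDist

/-- For every odd `k`, the distance of the `k`-bit majority function to the
closest affine Boolean function equals `2^{k−1} − C(k−1, (k−1)/2)`. -/
theorem majority_distance_to_affine (k : ℕ) (hk : Odd k) :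
    IsLeast {n : ℕ | ∃ (c0 : Bool) (c : Fin k → Bool), n = majAffineDist k c0 c}
      (2 ^ (k - 1) - Nat.choose (k - 1) ((k - 1) / 2)) := by
  obtain ⟨h, hh⟩ := hk
  have hkodd : k = 2 * h + 1 := by omega
  have hdiv : (k - 1) / 2 = h := by omega
  have hpos : 0 < k := by omega
  constructor
  · refine ⟨false, (fun j => decide (j = ⟨0, hpos⟩)), ?_⟩
    rw [hdiv, MajDist.dict_dist hkodd ⟨0, hpos⟩]
  · rintro n ⟨c0, c, rfl⟩
    rw [hdiv]
    exact MajDist.lower_bound hkodd c0 c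
end

section
/- For every odd natural number k ≥ 3, the strict inequality ν_k/2^k > β_k holds, where ν_k = 2^{k−1} − C(k−1,(k−1)/2) and β_k = 1/2 − 2^{k−2}/(k·C(k−1,(k−1)/2)). Equivalently, k · C(k−1,(k−1)/2)² < 4^{k−1}. Hence the non-contextual lower bound on the average error of an l2-MBQC evaluation of the k-bit majority function strictly exceeds the Evans–Schulman reliability threshold. -/
lemma aux_central (m : ℕ) (hm : 1 ≤ m) :
    (2 * m + 1) * (Nat.centralBinom m) ^ 2 < 16 ^ m := by
  induction m, hm using Nat.le_induction with
  | base => decide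
  | succ m hm ih =>
    have key := Nat.succ_mul_centralBinom_succ m
    have hsq : ((m + 1) * Nat.centralBinom (m + 1)) ^ 2
        = (2 * (2 * m + 1) * Nat.centralBinom m) ^ 2 := by rw [key]
    have hpos : 0 < 16 ^ m := Nat.pow_pos (by norm_num)
    have h16 : 16 ^ (m + 1) = 16 * 16 ^ m := by ring
    have hle : (2 * m + 1) * (Nat.centralBinom m) ^ 2 + 1 ≤ 16 ^ m := ih
    have hcancel : (m + 1) ^ 2 * ((2 * (m + 1) + 1) * (Nat.centralBinom (m + 1)) ^ 2)
        < (m + 1) ^ 2 * 16 ^ (m + 1) := by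
      nlinarith [hsq, hle, hpos]
    exact Nat.lt_of_mul_lt_mul_left hcancel

/-- For every odd `k ≥ 3`, `ν_k/2^k > β_k`, where
`ν_k = 2^{k−1} − C(k−1,(k−1)/2)` and
`β_k = 1/2 − 2^{k−2}/(k·C(k−1,(k−1)/2))`; equivalently,
`k·C(k−1,(k−1)/2)² < 4^{k−1}`. Hence the non-contextual lower bound on the
average error of an l2-MBQC evaluation of the `k`-bit majority function
strictly exceeds the Evans–Schulman reliability threshold. -/
theorem noncontextual_bound_exceeds_threshold (k : ℕ) (hk : Odd k) (hk3 : 3 ≤ k) :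
    ((2 : ℝ) ^ (k - 1) - (Nat.choose (k - 1) ((k - 1) / 2) : ℝ)) / 2 ^ k >
      1 / 2 - 2 ^ (k - 2) / (k * (Nat.choose (k - 1) ((k - 1) / 2) : ℝ)) ∧
    (k : ℝ) * (Nat.choose (k - 1) ((k - 1) / 2) : ℝ) ^ 2 < 4 ^ (k - 1) := by
  obtain ⟨m, rfl⟩ := hk
  have hm : 1 ≤ m := by omega
  have e1 : 2 * m + 1 - 1 = 2 * m := by omega
  have e2 : (2 * m) / 2 = m := by omega
  have e3 : 2 * m + 1 - 2 = 2 * m - 1 := by omega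
  have e4 : 2 * m + 1 = 2 * m + 1 := rfl
  rw [e1, e2, e3]
  have hcb : Nat.choose (2 * m) m = Nat.centralBinom m := (Nat.centralBinom_eq_two_mul_choose m).symm ▸ rfl
  have key := aux_central m hm
  set c : ℕ := Nat.choose (2 * m) m with hc
  have hceq : c = Nat.centralBinom m := rfl
  have hcpos : 0 < c := Nat.choose_pos (by omega)
  have hC : (0 : ℝ) < (c : ℝ) := by exact_mod_cast hcpos
  -- the nat inequality in ℝ
  have keyR : ((2 * m + 1 : ℕ) : ℝ) * (c : ℝ) ^ 2 < 16 ^ m := by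
    rw [hceq]
    exact_mod_cast key
  have h4 : (4 : ℝ) ^ (2 * m) = 16 ^ m := by
    rw [pow_mul]; norm_num
  have h2m : (2 : ℝ) ^ (2 * m) = 4 ^ m := by
    rw [pow_mul]; norm_num
  have h16 : (16 : ℝ) ^ m = 4 ^ m * 4 ^ m := by
    rw [← mul_pow]; norm_num
  have hA : (0 : ℝ) < 4 ^ m := by positivity
  have h2k : (2 : ℝ) ^ (2 * m + 1) = 2 * 4 ^ m := by
    rw [pow_succ, h2m]; ring
  have h2k2 : (2 : ℝ) ^ (2 * m - 1) * 2 = 4 ^ m := by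
    rw [← pow_succ]
    have : 2 * m - 1 + 1 = 2 * m := by omega
    rw [this, h2m]
  have hk' : (0 : ℝ) < ((2 * m + 1 : ℕ) : ℝ) := by positivity
  constructor
  · rw [gt_iff_lt, h2k, h2m]
    push_cast at keyR hk' ⊢
    have hden : (0 : ℝ) < (2 * (m:ℝ) + 1) * c := by positivity
    have h2pos : (0:ℝ) < 2 ^ (2*m-1) := by positivity
    rw [sub_lt_iff_lt_add, div_add_div _ _ (by positivity : ((2:ℝ)*4^m) ≠ 0) (ne_of_gt hden),
      lt_div_iff₀ (by positivity)]
    nlinarith [keyR, h16, h2k2, hC, hA, mul_pos hA hC]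
  · push_cast at keyR ⊢
    rw [h4]
    exact keyR
end

section
/- Define, for odd natural numbers k ≥ 3, the gap g(k) = 2^{k−2}/(k·C(k−1,(k−1)/2)) − C(k−1,(k−1)/2)/2^k (this equals ν_k/2^k − β_k). Then g decreases strictly monotonically along odd k: for every odd k ≥ 3, g(k+2) < g(k). -/
/-- The gap `g(k) = 2^{k−2}/(k·C(k−1,(k−1)/2)) − C(k−1,(k−1)/2)/2^k`,
which equals `ν_k/2^k − β_k`, the difference between the non-contextual lower
bound on the average error for the `k`-bit majority function and the
Evans–Schulman reliability threshold. -/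
noncomputable def gapg (k : ℕ) : ℝ :=
  2 ^ (k - 2) / (k * (Nat.choose (k - 1) ((k - 1) / 2) : ℝ)) -
    (Nat.choose (k - 1) ((k - 1) / 2) : ℝ) / 2 ^ k

lemma cb_sq_bound : ∀ n : ℕ, (Nat.centralBinom n) ^ 2 * (3 * n + 1) ≤ 16 ^ n := by
  intro n
  induction n with
  | zero => simp [Nat.centralBinom]
  | succ n ih =>
    have h := Nat.succ_mul_centralBinom_succ n
    have h2 : ((n + 1) * Nat.centralBinom (n + 1)) ^ 2 * (3 * (n + 1) + 1)
        = (2 * (2 * n + 1) * Nat.centralBinom n) ^ 2 * (3 * (n + 1) + 1) := by rw [h]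
    have hfac : (2 * (2 * n + 1)) ^ 2 * (3 * (n + 1) + 1) ≤ 16 * (n + 1) ^ 2 * (3 * n + 1) := by
      nlinarith [sq_nonneg n]
    have hmain : ((n + 1) * Nat.centralBinom (n + 1)) ^ 2 * (3 * (n + 1) + 1)
        ≤ 16 ^ (n + 1) * (n + 1) ^ 2 := by
      rw [h2]
      have : (2 * (2 * n + 1) * Nat.centralBinom n) ^ 2 * (3 * (n + 1) + 1)
          = (2 * (2 * n + 1)) ^ 2 * (3 * (n + 1) + 1) * (Nat.centralBinom n ^ 2) := by ring
      rw [this]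
      calc (2 * (2 * n + 1)) ^ 2 * (3 * (n + 1) + 1) * Nat.centralBinom n ^ 2
          ≤ 16 * (n + 1) ^ 2 * (3 * n + 1) * Nat.centralBinom n ^ 2 :=
            Nat.mul_le_mul_right _ hfac
        _ = 16 * (n + 1) ^ 2 * (Nat.centralBinom n ^ 2 * (3 * n + 1)) := by ring
        _ ≤ 16 * (n + 1) ^ 2 * 16 ^ n := Nat.mul_le_mul_left _ ih
        _ = 16 ^ (n + 1) * (n + 1) ^ 2 := by ring
    have hmain' : Nat.centralBinom (n + 1) ^ 2 * (3 * (n + 1) + 1) * (n + 1) ^ 2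
        ≤ 16 ^ (n + 1) * (n + 1) ^ 2 := by
      calc Nat.centralBinom (n + 1) ^ 2 * (3 * (n + 1) + 1) * (n + 1) ^ 2
          = ((n + 1) * Nat.centralBinom (n + 1)) ^ 2 * (3 * (n + 1) + 1) := by ring
        _ ≤ 16 ^ (n + 1) * (n + 1) ^ 2 := hmain
    have hpos : 0 < (n + 1) ^ 2 := by positivity
    exact Nat.le_of_mul_le_mul_right hmain' hpos

lemma cb_key (n : ℕ) :
    (Nat.centralBinom (n + 1)) ^ 2 * ((2 * n + 3) * (2 * n + 5))
      < 16 ^ (n + 1) * (2 * n + 4) := by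
  have h1 := cb_sq_bound (n + 1)
  have h2 : (2 * n + 3) * (2 * n + 5) < (2 * n + 4) * (3 * (n + 1) + 1) := by nlinarith
  have hlt : (Nat.centralBinom (n + 1)) ^ 2 * ((2 * n + 3) * (2 * n + 5)) * (3 * (n + 1) + 1)
      < 16 ^ (n + 1) * (2 * n + 4) * (3 * (n + 1) + 1) := by
    calc (Nat.centralBinom (n + 1)) ^ 2 * ((2 * n + 3) * (2 * n + 5)) * (3 * (n + 1) + 1)
        = (Nat.centralBinom (n + 1)) ^ 2 * (3 * (n + 1) + 1) * ((2 * n + 3) * (2 * n + 5)) := by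
          ring
      _ ≤ 16 ^ (n + 1) * ((2 * n + 3) * (2 * n + 5)) := Nat.mul_le_mul_right _ h1
      _ < 16 ^ (n + 1) * ((2 * n + 4) * (3 * (n + 1) + 1)) := by
          exact mul_lt_mul_of_pos_left h2 (by positivity)
      _ = 16 ^ (n + 1) * (2 * n + 4) * (3 * (n + 1) + 1) := by ring
  exact Nat.lt_of_mul_lt_mul_right hlt

/-- The gap `g` decreases strictly monotonically along odd `k`:
for every odd `k ≥ 3`, `g(k+2) < g(k)`. -/
theorem gap_strict_anti_on_odds (k : ℕ) (hk : Odd k) (hk3 : 3 ≤ k) :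
    gapg (k + 2) < gapg k := by
  obtain ⟨m, rfl⟩ := hk
  have hm : 1 ≤ m := by omega
  obtain ⟨n, rfl⟩ : ∃ n, m = n + 1 := ⟨m - 1, by omega⟩
  have hk' : 2 * (n + 1) + 1 = 2 * n + 3 := by ring
  rw [hk']
  have e1 : (2 * n + 3 - 1) = 2 * (n + 1) := by omega
  have e2 : (2 * (n + 1)) / 2 = n + 1 := by omega
  have e3 : (2 * n + 3 + 2 - 1) = 2 * (n + 2) := by omega
  have e4 : (2 * (n + 2)) / 2 = n + 2 := by omega
  have e5 : (2 * n + 3 - 2) = 2 * n + 1 := by omega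
  have e6 : (2 * n + 3 + 2 - 2) = 2 * n + 3 := by omega
  rw [gapg, gapg, e3, e4, e6, e1, e2, e5]
  rw [show Nat.choose (2 * (n + 1)) (n + 1) = Nat.centralBinom (n + 1) from rfl,
      show Nat.choose (2 * (n + 2)) (n + 2) = Nat.centralBinom (n + 2) from rfl]
  set c : ℝ := (Nat.centralBinom (n + 1) : ℝ) with hc
  set c' : ℝ := (Nat.centralBinom (n + 2) : ℝ) with hc'
  have hcpos : 0 < c := Nat.cast_pos.mpr (Nat.centralBinom_pos (n + 1))
  have hc'pos : 0 < c' := Nat.cast_pos.mpr (Nat.centralBinom_pos (n + 2))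
  have hrel : ((n : ℝ) + 2) * c' = 2 * (2 * (n : ℝ) + 3) * c := by
    have h := congrArg (fun x : ℕ => (x : ℝ)) (Nat.succ_mul_centralBinom_succ (n + 1))
    push_cast at h
    rw [hc, hc']
    push_cast
    linarith [h]
  set q : ℝ := (2 : ℝ) ^ (2 * n + 1) with hq
  have hqpos : 0 < q := by rw [hq]; positivity
  have hp3 : (2 : ℝ) ^ (2 * n + 3) = 4 * q := by
    rw [hq, show 2 * n + 3 = (2 * n + 1) + 2 by ring, pow_add]; ring
  have hp5 : (2 : ℝ) ^ (2 * n + 5) = 16 * q := by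
    rw [hq, show 2 * n + 5 = (2 * n + 1) + 4 by ring, pow_add]; ring
  have h16 : (16 : ℝ) ^ (n + 1) = 4 * q ^ 2 := by
    rw [hq, ← pow_mul, show (16 : ℝ) = 2 ^ 4 by norm_num, ← pow_mul]
    rw [show (2 * n + 1) * 2 = 4 * n + 2 by ring, show 4 * (n + 1) = (4 * n + 2) + 2 by ring,
      pow_add]
    ring
  have hkey : c ^ 2 * ((2 * (n : ℝ) + 3) * (2 * (n : ℝ) + 5)) < 4 * q ^ 2 * (2 * (n : ℝ) + 4) := by
    have h := (Nat.cast_lt (α := ℝ)).2 (cb_key n)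
    push_cast at h
    rw [← h16]
    rw [hc]
    push_cast
    convert h using 2 <;> push_cast <;> ring
  have hgap : 0 < 8 * ((n : ℝ) + 2) * q ^ 2 - (2 * (n : ℝ) + 3) * (2 * (n : ℝ) + 5) * c ^ 2 := by
    nlinarith [hkey]
  push_cast
  rw [hp3, hp5]
  -- eliminate c'
  have hn2 : ((n : ℝ) + 2) ≠ 0 := by positivity
  have h23 : (0:ℝ) < 2 * (n : ℝ) + 3 := by positivity
  have h25 : (0:ℝ) < 2 * (n : ℝ) + 3 + 2 := by positivity
  have t1 : 4 * q / ((2 * (n:ℝ) + 3 + 2) * c')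
      = 2 * q * ((n:ℝ) + 2) / ((2 * (n:ℝ) + 3 + 2) * ((2 * (n:ℝ) + 3) * c)) := by
    rw [div_eq_div_iff (by positivity) (by positivity)]
    linear_combination (-2 * q * (2 * (n:ℝ) + 3 + 2)) * hrel
  have t2 : c' / (16 * q) = (2 * (n:ℝ) + 3) * c / (8 * ((n:ℝ) + 2) * q) := by
    rw [div_eq_div_iff (by positivity) (by positivity)]
    linear_combination (8 * q) * hrel
  rw [t1, t2, sub_lt_sub_iff]
  rw [div_add_div _ _ (by positivity) (by positivity : (4:ℝ) * q ≠ 0),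
      div_add_div _ _ (by positivity) (by positivity : (8:ℝ) * ((n:ℝ) + 2) * q ≠ 0)]
  rw [div_lt_div_iff₀ (by positivity) (by positivity)]
  have hint : 0 < (2 * (n:ℝ) + 3) * c * q *
      (8 * ((n : ℝ) + 2) * q ^ 2 - (2 * (n : ℝ) + 3) * (2 * (n : ℝ) + 5) * c ^ 2) :=
    mul_pos (by positivity) hgap
  nlinarith [hint]
end

section
/- Define, for odd natural numbers k ≥ 3, the gap g(k) = 2^{k−2}/(k·C(k−1,(k−1)/2)) − C(k−1,(k−1)/2)/2^k (this equals ν_k/2^k − β_k). Then g(k) → 0 as k → ∞ along odd k; in particular, for every Δ > 0 there exists an odd k ≥ 3 such that 0 < g(k) < Δ. -/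
open Filter

/-- Lower bound `16^n ≤ 4n·C(2n,n)²` for `n ≥ 1` (i.e. `n·c_n² ≥ 1/4` is increasing). -/
lemma sixteen_pow_le (n : ℕ) (hn : 1 ≤ n) : 16 ^ n ≤ 4 * n * (Nat.centralBinom n) ^ 2 := by
  induction n with
  | zero => omega
  | succ m ih =>
    rcases Nat.eq_or_lt_of_le hn with h | h
    · have hm0 : m = 0 := by omega
      subst hm0; decide
    · have hm : 1 ≤ m := by omega
      have key := ih hm
      have hrec := Nat.succ_mul_centralBinom_succ m
      have h1 : (m + 1) * (16 ^ (m + 1)) ≤ (m + 1) * (4 * (m + 1) * (Nat.centralBinom (m+1)) ^ 2) := by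
        have e : (m + 1) * (4 * (m + 1) * (Nat.centralBinom (m+1)) ^ 2)
            = 4 * ((m + 1) * Nat.centralBinom (m+1)) ^ 2 := by ring
        rw [e, hrec]
        have h4 : 4 * (m * (m + 1)) ≤ (2 * m + 1) ^ 2 := by nlinarith
        calc (m + 1) * 16 ^ (m + 1) = 16 * (m + 1) * 16 ^ m := by ring
          _ ≤ 16 * (m + 1) * (4 * m * (Nat.centralBinom m) ^ 2) := Nat.mul_le_mul_left _ key
          _ = 16 * (4 * (m * (m + 1))) * (Nat.centralBinom m) ^ 2 := by ring
          _ ≤ 16 * (2 * m + 1) ^ 2 * (Nat.centralBinom m) ^ 2 :=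
              Nat.mul_le_mul_right _ (Nat.mul_le_mul_left 16 h4)
          _ = 4 * (2 * (2 * m + 1) * Nat.centralBinom m) ^ 2 := by ring
      exact Nat.le_of_mul_le_mul_left h1 (by omega)

/-- Upper bound `4(2n+1)·C(2n,n)² ≤ 3·16^n` for `n ≥ 1` (i.e. `(2n+1)c_n² ≤ 3/4` is decreasing). -/
lemma le_three_sixteen_pow (n : ℕ) (hn : 1 ≤ n) :
    4 * (2 * n + 1) * (Nat.centralBinom n) ^ 2 ≤ 3 * 16 ^ n := by
  induction n with
  | zero => omega
  | succ m ih =>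
    rcases Nat.eq_or_lt_of_le hn with h | h
    · have hm0 : m = 0 := by omega
      subst hm0; decide
    · have hm : 1 ≤ m := by omega
      have key := ih hm
      have hrec := Nat.succ_mul_centralBinom_succ m
      have h1 : (m + 1) ^ 2 * (4 * (2 * (m + 1) + 1) * (Nat.centralBinom (m+1)) ^ 2)
          ≤ (m + 1) ^ 2 * (3 * 16 ^ (m + 1)) := by
        have e : (m + 1) ^ 2 * (4 * (2 * (m + 1) + 1) * (Nat.centralBinom (m+1)) ^ 2)
            = 4 * (2 * m + 3) * ((m + 1) * Nat.centralBinom (m+1)) ^ 2 := by ring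
        rw [e, hrec]
        have e2 : 4 * (2 * m + 3) * (2 * (2 * m + 1) * Nat.centralBinom m) ^ 2
            = 4 * (2 * m + 3) * (2 * m + 1) * (4 * (2 * m + 1) * (Nat.centralBinom m) ^ 2) := by ring
        rw [e2]
        calc 4 * (2 * m + 3) * (2 * m + 1) * (4 * (2 * m + 1) * (Nat.centralBinom m) ^ 2)
            ≤ 4 * (2 * m + 3) * (2 * m + 1) * (3 * 16 ^ m) := Nat.mul_le_mul_left _ key
          _ ≤ (m + 1) ^ 2 * (3 * 16 ^ (m + 1)) := by
              have : 4 * (2 * m + 3) * (2 * m + 1) ≤ 16 * (m + 1) ^ 2 := by nlinarith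
              calc 4 * (2 * m + 3) * (2 * m + 1) * (3 * 16 ^ m)
                  ≤ 16 * (m + 1) ^ 2 * (3 * 16 ^ m) := Nat.mul_le_mul_right _ this
                _ = (m + 1) ^ 2 * (3 * 16 ^ (m + 1)) := by ring
      exact Nat.le_of_mul_le_mul_left h1 (by positivity)

lemma gapg_eq (n : ℕ) (hn : 1 ≤ n) :
    gapg (2 * n + 1) = (4 : ℝ) ^ n / (2 * (2 * n + 1) * (Nat.centralBinom n : ℝ)) -
      (Nat.centralBinom n : ℝ) / (2 * 4 ^ n) := by
  have h1 : 2 * n + 1 - 2 = 2 * n - 1 := by omega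
  have h2 : 2 * n + 1 - 1 = 2 * n := by omega
  have h3 : 2 * n / 2 = n := by omega
  unfold gapg
  rw [h1, h2, h3]
  have hC : Nat.choose (2 * n) n = Nat.centralBinom n := rfl
  rw [hC]
  have hp1 : (2 : ℝ) ^ (2 * n - 1) = 4 ^ n / 2 := by
    have : 2 * n - 1 + 1 = 2 * n := by omega
    have h4 : (2:ℝ) ^ (2*n) = 4 ^ n := by
      rw [pow_mul]; norm_num
    field_simp
    rw [← pow_succ, this, h4]
  have hp2 : (2 : ℝ) ^ (2 * n + 1) = 2 * 4 ^ n := by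
    rw [pow_succ, pow_mul]; norm_num; ring
  rw [hp1, hp2]
  push_cast
  have hCpos : (0:ℝ) < (Nat.centralBinom n : ℝ) := by
    exact_mod_cast Nat.centralBinom_pos n
  field_simp

lemma gapg_pos (n : ℕ) (hn : 1 ≤ n) : 0 < gapg (2 * n + 1) := by
  rw [gapg_eq n hn]
  have hCpos : (0:ℝ) < (Nat.centralBinom n : ℝ) := by
    exact_mod_cast Nat.centralBinom_pos n
  have hU : 4 * (2 * (n:ℝ) + 1) * (Nat.centralBinom n : ℝ) ^ 2 ≤ 3 * 16 ^ n := by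
    exact_mod_cast le_three_sixteen_pow n hn
  rw [sub_pos, div_lt_div_iff₀ (by positivity) (by positivity)]
  have h16 : (16 : ℝ) ^ n = 4 ^ n * 4 ^ n := by
    rw [← mul_pow]; norm_num
  nlinarith [pow_pos (show (0:ℝ) < 4 by norm_num) n]

lemma gapg_le (n : ℕ) (hn : 1 ≤ n) : gapg (2 * n + 1) ≤ 1 / Real.sqrt n := by
  have hCpos : (0:ℝ) < (Nat.centralBinom n : ℝ) := by
    exact_mod_cast Nat.centralBinom_pos n
  have hnpos : (0:ℝ) < (n:ℝ) := by exact_mod_cast hn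
  have hsq : (0:ℝ) < Real.sqrt n := Real.sqrt_pos.mpr hnpos
  -- lower bound on C : 4^n ≤ 2 √n C
  have hL : (4:ℝ) ^ n ≤ 2 * Real.sqrt n * (Nat.centralBinom n : ℝ) := by
    have h : (16:ℝ) ^ n ≤ 4 * n * (Nat.centralBinom n : ℝ) ^ 2 := by
      exact_mod_cast sixteen_pow_le n hn
    have h1 : ((4:ℝ) ^ n) ^ 2 ≤ (2 * Real.sqrt n * (Nat.centralBinom n : ℝ)) ^ 2 := by
      have e1 : ((4:ℝ) ^ n) ^ 2 = 16 ^ n := by rw [← pow_mul, pow_mul']; norm_num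
      have e2 : (2 * Real.sqrt n * (Nat.centralBinom n : ℝ)) ^ 2
          = 4 * n * (Nat.centralBinom n : ℝ) ^ 2 := by
        have : Real.sqrt n ^ 2 = n := Real.sq_sqrt hnpos.le
        nlinarith [this]
      rw [e1, e2]; exact h
    calc (4:ℝ) ^ n = Real.sqrt (((4:ℝ) ^ n) ^ 2) := (Real.sqrt_sq (by positivity)).symm
      _ ≤ Real.sqrt ((2 * Real.sqrt n * (Nat.centralBinom n : ℝ)) ^ 2) := Real.sqrt_le_sqrt h1
      _ = 2 * Real.sqrt n * (Nat.centralBinom n : ℝ) := Real.sqrt_sq (by positivity)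
  rw [gapg_eq n hn]
  have hterm : (4 : ℝ) ^ n / (2 * (2 * n + 1) * (Nat.centralBinom n : ℝ)) ≤ 1 / Real.sqrt n := by
    rw [div_le_div_iff₀ (by positivity) hsq, one_mul]
    have h2 : Real.sqrt n * (2 * Real.sqrt n * (Nat.centralBinom n : ℝ))
        ≤ 2 * (2 * n + 1) * (Nat.centralBinom n : ℝ) := by
      have hs2 : Real.sqrt n * Real.sqrt n = n := Real.mul_self_sqrt hnpos.le
      nlinarith
    calc (4:ℝ) ^ n * Real.sqrt n ≤ (2 * Real.sqrt n * (Nat.centralBinom n : ℝ)) * Real.sqrt n := by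
          apply mul_le_mul_of_nonneg_right hL hsq.le
      _ = Real.sqrt n * (2 * Real.sqrt n * (Nat.centralBinom n : ℝ)) := by ring
      _ ≤ 2 * (2 * n + 1) * (Nat.centralBinom n : ℝ) := h2
  have : (Nat.centralBinom n : ℝ) / (2 * 4 ^ n) ≥ 0 := by positivity
  linarith

lemma sqrt_nat_tendsto : Tendsto (fun n : ℕ => Real.sqrt n) atTop atTop := by
  apply Filter.tendsto_atTop_atTop_of_monotone
  · intro a b h
    exact Real.sqrt_le_sqrt (by exact_mod_cast h)
  · intro b
    obtain ⟨n, hn⟩ := exists_nat_ge (b ^ 2)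
    exact ⟨n, by
      calc b ≤ |b| := le_abs_self b
        _ = Real.sqrt (b ^ 2) := (Real.sqrt_sq_eq_abs b).symm
        _ ≤ Real.sqrt n := Real.sqrt_le_sqrt hn⟩

/-- The gap `g(k)` tends to `0` as `k → ∞` along odd `k`; in particular, for
every `Δ > 0` there is an odd `k ≥ 3` with `0 < g(k) < Δ`. -/
theorem gap_tendsto_zero_along_odds :
    Tendsto (fun n : ℕ => gapg (2 * n + 1)) atTop (nhds 0) ∧
    ∀ Δ : ℝ, 0 < Δ → ∃ k : ℕ, Odd k ∧ 3 ≤ k ∧ 0 < gapg k ∧ gapg k < Δ := by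
  have htend : Tendsto (fun n : ℕ => gapg (2 * n + 1)) atTop (nhds 0) := by
    have hupper : Tendsto (fun n : ℕ => 1 / Real.sqrt n) atTop (nhds 0) := by
      simpa [one_div, Pi.inv_def] using sqrt_nat_tendsto.inv_tendsto_atTop
    apply tendsto_of_tendsto_of_tendsto_of_le_of_le' tendsto_const_nhds hupper
    · filter_upwards [eventually_ge_atTop 1] with n hn
      exact (gapg_pos n hn).le
    · filter_upwards [eventually_ge_atTop 1] with n hn
      exact gapg_le n hn
  refine ⟨htend, fun Δ hΔ => ?_⟩
  have h := htend.eventually (gt_mem_nhds (show (0:ℝ) < Δ from hΔ))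
  obtain ⟨N, hN⟩ := (h.and (eventually_ge_atTop 1)).exists
  exact ⟨2 * N + 1, ⟨N, by ring⟩, by omega, gapg_pos N hN.2, hN.1⟩
end
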